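/- arXiv:2210.05054 — 3 statements merged into one kernel-verified Lean document; each statement's English description precedes it below -/
import Mathlib

section
/- Suppose π : X → Y and π' : X' → Y' are factor maps of G-systems and there is a commutative diagram in which φ̄ : X → X' is a factor map, φ : Y → Y' is an isomorphism of measure-preserving G-systems, and π' ∘ φ̄ = φ ∘ π (i.e. π is an upward extension of π'). Then for every rate function U and every Følner sequence (F_n) for G, h_slow^{U,(F_n)}(X' | π') ≤ h_slow^{U,(F_n)}(X | π). -/
open MeasureTheory Filter Set Topology
open scoped ENNReal Classical

section SlowEntropyDefs

variable {G : Type*} [Group G]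

/-- A measure-preserving action of a group `G` on a probability space. -/
structure IsMPSystem {X : Type*} [MeasurableSpace X] (T : G → X → X) (μ : Measure X) : Prop where
  prob : IsProbabilityMeasure μ
  meas : ∀ g, Measurable (T g)
  mp : ∀ g, MeasurePreserving (T g) μ μ
  mul : ∀ g g' x, T (g * g') x = T g (T g' x)
  one : ∀ x, T 1 x = x

/-- A factor map between measure-preserving `G`-systems. -/
structure IsFactorMap {X Y : Type*} [MeasurableSpace X] [MeasurableSpace Y]
    (T : G → X → X) (μ : Measure X) (S : G → Y → Y) (ν : Measure Y) (π : X → Y) : Prop where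
  meas : Measurable π
  map : μ.map π = ν
  equiv : ∀ g x, π (T g x) = S g (π x)

/-- An isomorphism of measure-preserving `G`-systems: a factor map with an a.e. two-sided
inverse factor map. -/
def IsIsomorphism {X Y : Type*} [MeasurableSpace X] [MeasurableSpace Y]
    (T : G → X → X) (μ : Measure X) (S : G → Y → Y) (ν : Measure Y) (π : X → Y) : Prop :=
  IsFactorMap T μ S ν π ∧ ∃ ρ : Y → X, IsFactorMap S ν T μ ρ ∧
    (∀ᵐ x ∂μ, ρ (π x) = x) ∧ (∀ᵐ y ∂ν, π (ρ y) = y)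

/-- `μy` is a disintegration of `μ` over the map `π : X → Y` (with `ν` the image of `μ`). -/
structure IsDisintegration {X Y : Type*} [MeasurableSpace X] [MeasurableSpace Y]
    (μ : Measure X) (ν : Measure Y) (π : X → Y) (μy : Y → Measure X) : Prop where
  prob : ∀ y, IsProbabilityMeasure (μy y)
  meas : ∀ s : Set X, MeasurableSet s → Measurable fun y => μy y s
  eq : ∀ s : Set X, MeasurableSet s → μ s = ∫⁻ y, μy y s ∂ν
  supp : ∀ᵐ y ∂ν, μy y (π ⁻¹' {y}) = 1

/-- A (left) Følner sequence for `G`: a sequence of nonempty finite subsets `F n ⊆ G` with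
`|gFₙ ∩ Fₙ| / |Fₙ| → 1` for every `g ∈ G`. -/
def IsFolner (F : ℕ → Finset G) : Prop :=
  (∀ n, (F n).Nonempty) ∧ ∀ g : G,
    Tendsto (fun n => ((((F n).image fun h => g * h) ∩ F n).card : ℝ) / ((F n).card : ℝ))
      atTop (nhds 1)

/-- The normalized Hamming distance `d_{P,F}` between the `(P,F)`-names of two points. -/
noncomputable def hamDist {X : Type*} (T : G → X → X) {r : ℕ} (P : X → Fin r)
    (F : Finset G) (x x' : X) : ℝ :=
  ((F.filter fun f => P (T f x) ≠ P (T f x')).card : ℝ) / (F.card : ℝ)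

/-- The set `E` has `d_{P,F}`-diameter at most `ε`. -/
def diamLE {X : Type*} (T : G → X → X) {r : ℕ} (P : X → Fin r) (F : Finset G)
    (E : Set X) (ε : ℝ) : Prop :=
  ∀ x ∈ E, ∀ x' ∈ E, hamDist T P F x x' ≤ ε

/-- The Hamming `ε`-covering number `cov(λ, P, F, ε)`: the smallest `M` such that there are
sets `E₁, …, E_M` of `d_{P,F}`-diameter at most `ε` whose union has `λ`-measure `≥ 1 - ε`. -/
noncomputable def hamCov {X : Type*} [MeasurableSpace X] (T : G → X → X) (lam : Measure X)
    {r : ℕ} (P : X → Fin r) (F : Finset G) (ε : ℝ) : ℕ :=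
  sInf {M : ℕ | ∃ E : Fin M → Set X, (∀ i, diamLE T P F (E i) ε) ∧
    ENNReal.ofReal (1 - ε) ≤ lam (⋃ i, E i)}

/-- The relative Hamming `ε`-covering number `cov(μ, P, F, ε | π)`, defined through the
disintegration `μy` of `μ` over `π` and the image measure `ν`: the smallest `M` such that
there exists `S ⊆ Y` with `ν S ≥ 1 - ε` and `cov(μ_y, P, F, ε) ≤ M` for every `y ∈ S`. -/
noncomputable def hamCovRel {X Y : Type*} [MeasurableSpace X] [MeasurableSpace Y]
    (T : G → X → X) (μy : Y → Measure X) (ν : Measure Y) {r : ℕ} (P : X → Fin r)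
    (F : Finset G) (ε : ℝ) : ℕ :=
  sInf {M : ℕ | ∃ S : Set Y, MeasurableSet S ∧ ENNReal.ofReal (1 - ε) ≤ ν S ∧
    ∀ y ∈ S, hamCov T (μy y) P F ε ≤ M}

/-- A rate function: an increasing positive function on `ℕ` tending to infinity. -/
def IsRateFunction (U : ℕ → ℝ) : Prop :=
  (∀ n, 0 < U n) ∧ Monotone U ∧ Tendsto U atTop atTop

/-- Relative slow entropy of a partition:
`sup_{ε>0} limsup_n cov(μ, P, F_n, ε | π) / U(|F_n|)`, valued in `[0,∞]`. -/
noncomputable def slowEntropyPartRel {X Y : Type*} [MeasurableSpace X] [MeasurableSpace Y]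
    (T : G → X → X) (μy : Y → Measure X) (ν : Measure Y) {r : ℕ} (P : X → Fin r)
    (U : ℕ → ℝ) (F : ℕ → Finset G) : ℝ≥0∞ :=
  ⨆ ε ∈ Ioi (0 : ℝ),
    Filter.limsup
      (fun n => ENNReal.ofReal ((hamCovRel T μy ν P (F n) ε : ℝ) / U (F n).card)) atTop

/-- Relative slow entropy: the supremum over all finite measurable partitions. -/
noncomputable def slowEntropyRel {X Y : Type*} [MeasurableSpace X] [MeasurableSpace Y]
    (T : G → X → X) (μy : Y → Measure X) (ν : Measure Y)
    (U : ℕ → ℝ) (F : ℕ → Finset G) : ℝ≥0∞ :=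
  ⨆ (r : ℕ) (P : X → Fin r) (_ : Measurable P), slowEntropyPartRel T μy ν P U F

/-- The partition distance `dist_λ(P, Q) = λ{x : P(x) ≠ Q(x)}` between two labeled
partitions indexed by the same set. -/
noncomputable def partDist {Z : Type*} [MeasurableSpace Z] (lam : Measure Z)
    {ι : Type*} (P Q : Z → ι) : ℝ≥0∞ :=
  lam {z | P z ≠ Q z}

/-- Ergodicity of a measure-preserving `G`-action. -/
def IsErgodicAction {X : Type*} [MeasurableSpace X] (T : G → X → X) (μ : Measure X) : Prop :=
  ∀ s : Set X, MeasurableSet s → (∀ g, T g ⁻¹' s = s) → μ s = 0 ∨ μ s = 1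

end SlowEntropyDefs


section Aux

open MeasureTheory Filter Set Topology MeasurableSpace
open scoped ENNReal Classical

variable {G : Type*} [Group G]

/-- The basic disintegration identity: `∫_B μy y s dν = μ (s ∩ π⁻¹ B)`. -/
lemma setLIntegral_disint {X Y : Type*} [MeasurableSpace X] [MeasurableSpace Y]
    [MeasurableSingletonClass Y]
    {μ : Measure X} {ν : Measure Y} {π : X → Y} {μy : Y → Measure X}
    (hd : IsDisintegration μ ν π μy) (hπ : Measurable π)
    {s : Set X} (hs : MeasurableSet s) {B : Set Y} (hB : MeasurableSet B) :
    ∫⁻ y in B, μy y s ∂ν = μ (s ∩ π ⁻¹' B) := by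
  rw [hd.eq _ (hs.inter (hπ hB)), ← lintegral_indicator hB]
  apply lintegral_congr_ae
  filter_upwards [hd.supp] with y hy
  haveI := hd.prob y
  have hcnull : μy y ((π ⁻¹' {y})ᶜ) = 0 := by
    rw [measure_compl (hπ (measurableSet_singleton y)) (measure_ne_top _ _), hy,
      measure_univ]
    simp
  by_cases hyB : y ∈ B
  · have h1 : μy y (s ∩ π ⁻¹' B) = μy y s := by
      refine le_antisymm (measure_mono inter_subset_left) ?_
      have hsub : s ⊆ (s ∩ π ⁻¹' B) ∪ (π ⁻¹' {y})ᶜ := by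
        intro x hx
        by_cases hxy : π x = y
        · exact Or.inl ⟨hx, by simp [mem_preimage, hxy, hyB]⟩
        · exact Or.inr hxy
      calc μy y s ≤ μy y ((s ∩ π ⁻¹' B) ∪ (π ⁻¹' {y})ᶜ) := measure_mono hsub
        _ ≤ μy y (s ∩ π ⁻¹' B) + μy y ((π ⁻¹' {y})ᶜ) := measure_union_le _ _
        _ = μy y (s ∩ π ⁻¹' B) := by rw [hcnull, add_zero]
    rw [indicator_of_mem hyB]
    exact h1.symm
  · rw [indicator_of_notMem hyB]
    refine (measure_mono_null ?_ hcnull).symm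
    intro x hx hxy
    exact hyB (by rw [← hxy]; exact hx.2)

/-- Two measurable families of probability measures with the same set-integrals agree a.e. -/
lemma kernels_ae_eq {X' Y' : Type*} [MeasurableSpace X'] [MeasurableSpace Y']
    [CountablyGenerated X']
    {ν' : Measure Y'} [IsFiniteMeasure ν'] {κ₁ κ₂ : Y' → Measure X'}
    (hp₁ : ∀ y, IsProbabilityMeasure (κ₁ y)) (hp₂ : ∀ y, IsProbabilityMeasure (κ₂ y))
    (hm₁ : ∀ s : Set X', MeasurableSet s → Measurable fun y => κ₁ y s)
    (hm₂ : ∀ s : Set X', MeasurableSet s → Measurable fun y => κ₂ y s)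
    (h : ∀ s : Set X', MeasurableSet s → ∀ B : Set Y', MeasurableSet B →
      ∫⁻ y in B, κ₁ y s ∂ν' = ∫⁻ y in B, κ₂ y s ∂ν') :
    ∀ᵐ y ∂ν', κ₁ y = κ₂ y := by
  have hae : ∀ s : Set X', MeasurableSet s → ∀ᵐ y ∂ν', κ₁ y s = κ₂ y s := fun s hs =>
    ae_eq_of_forall_setLIntegral_eq_of_sigmaFinite (hm₁ s hs) (hm₂ s hs)
      fun B hB _ => h s hs B hB
  set b := countableGeneratingSet X' with hb
  set C : Set (Set X') := (fun t => ⋂₀ t) '' {t | t.Finite ∧ t ⊆ b ∧ t.Nonempty} with hC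
  have hCcount : C.Countable := by
    refine Countable.image (Countable.mono ?_
      (countable_setOf_finite_subset (countable_countableGeneratingSet (α := X')))) _
    intro t ht
    exact ⟨ht.1, ht.2.1⟩
  have hCmeas : ∀ t ∈ C, MeasurableSet t := by
    rintro t ⟨u, ⟨hu1, hu2, _⟩, rfl⟩
    exact MeasurableSet.sInter hu1.countable
      fun s hs => measurableSet_countableGeneratingSet (hu2 hs)
  have hCpi : IsPiSystem C := by
    rintro t1 ⟨u1, ⟨h11, h12, h13⟩, rfl⟩ t2 ⟨u2, ⟨h21, h22, h23⟩, rfl⟩ _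
    exact ⟨u1 ∪ u2, ⟨h11.union h21, union_subset h12 h22, h13.mono subset_union_left⟩,
      by simpa using sInter_union u1 u2⟩
  have hgen : ‹MeasurableSpace X'› = generateFrom C := by
    refine le_antisymm ?_ (generateFrom_le hCmeas)
    rw [← generateFrom_countableGeneratingSet (α := X')]
    refine generateFrom_le fun s hs => ?_
    exact measurableSet_generateFrom ⟨{s}, ⟨finite_singleton s, singleton_subset_iff.2 hs,
      singleton_nonempty s⟩, sInter_singleton s⟩
  have key : ∀ᵐ y ∂ν', ∀ ⦃t : Set X'⦄, MeasurableSet t → κ₁ y t = κ₂ y t := by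
    refine MeasurableSpace.ae_induction_on_inter hgen hCpi ?_ ?_ ?_ ?_
    · exact ae_of_all _ fun y => by simp
    · rw [ae_ball_iff hCcount]
      exact fun t ht => hae t (hCmeas t ht)
    · refine ae_of_all _ fun y t ht heq => ?_
      haveI := hp₁ y; haveI := hp₂ y
      rw [measure_compl ht (measure_ne_top _ _), measure_compl ht (measure_ne_top _ _), heq,
        measure_univ, measure_univ]
    · refine ae_of_all _ fun y f hdisj hf heq => ?_
      rw [measure_iUnion hdisj hf, measure_iUnion hdisj hf]
      exact tsum_congr heq
  filter_upwards [key] with y hy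
  exact Measure.ext fun t ht => hy ht

/-- The trivial cover by names shows the covering-number set contains the number of names. -/
lemma hamCov_card_mem {X : Type*} [MeasurableSpace X] (T : G → X → X) (lam : Measure X)
    [IsProbabilityMeasure lam] {r : ℕ} (P : X → Fin r) (F : Finset G) {ε : ℝ} (hε : 0 < ε) :
    Fintype.card (F → Fin r) ∈ {M : ℕ | ∃ E : Fin M → Set X,
      (∀ i, diamLE T P F (E i) ε) ∧ ENNReal.ofReal (1 - ε) ≤ lam (⋃ i, E i)} := by
  classical
  set e := Fintype.equivFin (F → Fin r) with he
  refine ⟨fun i => {x | ∀ f : F, P (T f x) = e.symm i f}, ?_, ?_⟩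
  · intro i x hx x' hx'
    have hemp : (F.filter fun f => P (T f x) ≠ P (T f x')) = ∅ := by
      refine Finset.filter_false_of_mem fun f hf => ?_
      simp only [ne_eq, not_not]
      rw [hx ⟨f, hf⟩, hx' ⟨f, hf⟩]
    unfold hamDist
    rw [hemp]
    simp [hε.le]
  · have huniv : (⋃ i, {x | ∀ f : F, P (T f x) = e.symm i f}) = univ := by
      refine eq_univ_of_forall fun x => mem_iUnion.2 ⟨e fun f => P (T f x), fun f => ?_⟩
      simp
    rw [huniv, measure_univ]
    exact ENNReal.ofReal_le_one.2 (by linarith)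

lemma hamCov_le_card {X : Type*} [MeasurableSpace X] (T : G → X → X) (lam : Measure X)
    [IsProbabilityMeasure lam] {r : ℕ} (P : X → Fin r) (F : Finset G) {ε : ℝ} (hε : 0 < ε) :
    hamCov T lam P F ε ≤ Fintype.card (F → Fin r) :=
  Nat.sInf_le (hamCov_card_mem T lam P F hε)

/-- Pushing a cover forward along an equivariant map. -/
lemma hamCov_map_le {X X' : Type*} [MeasurableSpace X] [MeasurableSpace X']
    (T : G → X → X) (T' : G → X' → X') (lam : Measure X) [IsProbabilityMeasure lam]
    (φbar : X → X') (hφm : Measurable φbar)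
    (hequiv : ∀ g x, φbar (T g x) = T' g (φbar x)) {r : ℕ} (P' : X' → Fin r)
    (F : Finset G) {ε : ℝ} (hε : 0 < ε) :
    hamCov T' (lam.map φbar) P' F ε ≤ hamCov T lam (fun x => P' (φbar x)) F ε := by
  obtain ⟨E, hdiam, hcov⟩ := Nat.sInf_mem ⟨_, hamCov_card_mem T lam (fun x => P' (φbar x)) F hε⟩
  apply Nat.sInf_le
  refine ⟨fun i => φbar '' E i, ?_, ?_⟩
  · rintro i x ⟨a, ha, rfl⟩ x' ⟨a', ha', rfl⟩
    have hfilt : (F.filter fun f => P' (T' f (φbar a)) ≠ P' (T' f (φbar a')))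
        = F.filter fun f => P' (φbar (T f a)) ≠ P' (φbar (T f a')) := by
      refine Finset.filter_congr fun f hf => ?_
      rw [hequiv, hequiv]
    have hdeq : hamDist T' P' F (φbar a) (φbar a')
        = hamDist T (fun x => P' (φbar x)) F a a' := by
      unfold hamDist
      rw [hfilt]
    rw [hdeq]
    exact hdiam i a ha a' ha'
  · calc ENNReal.ofReal (1 - ε) ≤ lam (⋃ i, E i) := hcov
      _ ≤ lam (φbar ⁻¹' (φbar '' ⋃ i, E i)) := measure_mono (subset_preimage_image _ _)
      _ ≤ (lam.map φbar) (φbar '' ⋃ i, E i) := Measure.le_map_apply hφm.aemeasurable _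
      _ = (lam.map φbar) (⋃ i, φbar '' E i) := by rw [image_iUnion]

end Aux


/-- Theorem `MonotoneUnderExtensions`.
If `π : X → Y` is an upward extension of `π' : X' → Y'` (i.e. there is a factor map
`φ̄ : X → X'` and an isomorphism `φ : Y → Y'` with `π' ∘ φ̄ = φ ∘ π`), then
`h_slow^{U,(F_n)}(X' | π') ≤ h_slow^{U,(F_n)}(X | π)` for every rate function `U` and
Følner sequence `(F_n)`. -/
theorem relative_slow_entropy_monotone_under_extensions
    {G X Y X' Y' : Type*} [Group G] [Countable G]
    [MeasurableSpace X] [MeasurableSpace Y] [MeasurableSpace X'] [MeasurableSpace Y']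
    [StandardBorelSpace X] [StandardBorelSpace Y] [StandardBorelSpace X'] [StandardBorelSpace Y']
    (T : G → X → X) (μ : Measure X) (S : G → Y → Y) (ν : Measure Y)
    (T' : G → X' → X') (μ' : Measure X') (S' : G → Y' → Y') (ν' : Measure Y')
    (hX : IsMPSystem T μ) (hY : IsMPSystem S ν) (hX' : IsMPSystem T' μ') (hY' : IsMPSystem S' ν')
    (π : X → Y) (π' : X' → Y')
    (hπ : IsFactorMap T μ S ν π) (hπ' : IsFactorMap T' μ' S' ν' π')
    (φbar : X → X') (φ : Y → Y')
    (hφbar : IsFactorMap T μ T' μ' φbar) (hφ : IsIsomorphism S ν S' ν' φ)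
    (hcomm : ∀ x, π' (φbar x) = φ (π x))
    (μy : Y → Measure X) (hdis : IsDisintegration μ ν π μy)
    (μy' : Y' → Measure X') (hdis' : IsDisintegration μ' ν' π' μy')
    (U : ℕ → ℝ) (hU : IsRateFunction U) (F : ℕ → Finset G) (hF : IsFolner F) :
    slowEntropyRel T' μy' ν' U F ≤ slowEntropyRel T μy ν U F := by
  classical
  haveI := hY.prob
  haveI := hY'.prob
  obtain ⟨hφf, ρ, hρf, hρφ, hφρ⟩ := hφ
  -- a.e. uniqueness of the disintegration: `μy' y' = (μy (ρ y')).map φbar` for a.e. `y'`.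
  have huniq : ∀ᵐ y' ∂ν', μy' y' = (μy (ρ y')).map φbar := by
    refine kernels_ae_eq hdis'.prob ?_ hdis'.meas ?_ ?_
    · intro y'
      haveI := hdis.prob (ρ y')
      exact Measure.isProbabilityMeasure_map hφbar.meas.aemeasurable
    · intro s hs
      have : (fun y' => ((μy (ρ y')).map φbar) s) = fun y' => μy (ρ y') (φbar ⁻¹' s) := by
        funext y'
        rw [Measure.map_apply hφbar.meas hs]
      rw [this]
      exact (hdis.meas _ (hφbar.meas hs)).comp hρf.meas
    · intro s hs B hB
      rw [setLIntegral_disint hdis' hπ'.meas hs hB]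
      have hint : (fun y' => ((μy (ρ y')).map φbar) s)
          = fun y' => μy (ρ y') (φbar ⁻¹' s) := by
        funext y'
        rw [Measure.map_apply hφbar.meas hs]
      have hg : Measurable fun y' => μy (ρ y') (φbar ⁻¹' s) :=
        (hdis.meas _ (hφbar.meas hs)).comp hρf.meas
      refine Eq.symm ?_
      calc ∫⁻ y' in B, ((μy (ρ y')).map φbar) s ∂ν'
          = ∫⁻ y' in B, μy (ρ y') (φbar ⁻¹' s) ∂ν' := by rw [hint]
        _ = ∫⁻ y in φ ⁻¹' B, μy (ρ (φ y)) (φbar ⁻¹' s) ∂ν := by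
            rw [← hφf.map, setLIntegral_map hB hg hφf.meas]
        _ = ∫⁻ y in φ ⁻¹' B, μy y (φbar ⁻¹' s) ∂ν := by
            refine lintegral_congr_ae ?_
            filter_upwards [ae_restrict_of_ae hρφ] with y hy
            rw [hy]
        _ = μ (φbar ⁻¹' s ∩ π ⁻¹' (φ ⁻¹' B)) :=
            setLIntegral_disint hdis hπ.meas (hφbar.meas hs) (hφf.meas hB)
        _ = μ' (s ∩ π' ⁻¹' B) := by
            rw [← hφbar.map, Measure.map_apply hφbar.meas (hs.inter (hπ'.meas hB))]
            congr 1
            ext x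
            simp [mem_preimage, hcomm x]
  set N := toMeasurable ν' {y' | μy' y' = (μy (ρ y')).map φbar}ᶜ with hN
  have hN0 : ν' N = 0 := by
    rw [hN, measure_toMeasurable]
    exact huniq
  -- main covering-number comparison
  have hcovrel : ∀ {r : ℕ} (P' : X' → Fin r) (n : ℕ) {ε : ℝ}, 0 < ε →
      hamCovRel T' μy' ν' P' (F n) ε ≤ hamCovRel T μy ν (fun x => P' (φbar x)) (F n) ε := by
    intro r P' n ε hε
    set P : X → Fin r := fun x => P' (φbar x) with hP
    have hrelmem : Fintype.card (↥(F n) → Fin r) ∈ {M : ℕ | ∃ Sy : Set Y,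
        MeasurableSet Sy ∧ ENNReal.ofReal (1 - ε) ≤ ν Sy ∧
        ∀ y ∈ Sy, hamCov T (μy y) P (F n) ε ≤ M} := by
      have h1 : ENNReal.ofReal (1 - ε) ≤ ν univ := by
        rw [measure_univ]
        exact ENNReal.ofReal_le_one.2 (by linarith)
      refine ⟨univ, MeasurableSet.univ, h1, fun y _ => ?_⟩
      haveI := hdis.prob y
      exact hamCov_le_card T (μy y) P (F n) hε
    obtain ⟨Sy, hSm, hSν, hSle⟩ := Nat.sInf_mem (Set.nonempty_of_mem hrelmem)
    apply Nat.sInf_le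
    refine ⟨ρ ⁻¹' Sy \ N, (hρf.meas hSm).diff (measurableSet_toMeasurable _ _), ?_, ?_⟩
    · rw [measure_diff_null hN0]
      have hmap : ν' (ρ ⁻¹' Sy) = ν Sy := by
        rw [← hρf.map, Measure.map_apply hρf.meas hSm]
      rw [hmap]
      exact hSν
    · intro y' hy'
      have hmem : μy' y' = (μy (ρ y')).map φbar := by
        by_contra h
        exact hy'.2 (subset_toMeasurable _ _ h)
      rw [hmem]
      haveI := hdis.prob (ρ y')
      exact le_trans
        (hamCov_map_le T T' (μy (ρ y')) φbar hφbar.meas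
          (fun g x => hφbar.equiv g x) P' (F n) hε)
        (hSle (ρ y') hy'.1)
  -- assemble
  refine iSup_le fun r => iSup_le fun P' => iSup_le fun hP' => ?_
  refine le_trans ?_ (le_iSup_of_le r (le_iSup_of_le (fun x => P' (φbar x))
    (le_iSup_of_le (hP'.comp hφbar.meas) le_rfl)))
  refine iSup_le fun ε => iSup_le fun hε => ?_
  refine le_trans ?_ (le_iSup_of_le ε (le_iSup_of_le hε le_rfl))
  refine Filter.limsup_le_limsup (Eventually.of_forall fun n => ?_)
  refine ENNReal.ofReal_le_ofReal ?_
  have hU0 := hU.1 (F n).card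
  have hle := hcovrel P' n (show (0:ℝ) < ε from hε)
  gcongr
end

section
/- Fix a Følner sequence (F_n) for G and a factor map π : X → Y. For any finite measurable partition Q of X and any 0 < ε < 1, there exists ε' > 0 (one may take ε' = (ε/2)^4) such that: for every finite measurable partition Q' of X indexed by the same set and satisfying dist_μ(Q, Q') ≤ ε', one has cov(μ, Q, F_n, ε | π) ≤ cov(μ, Q', F_n, ε' | π) for all sufficiently large n. -/
open MeasureTheory Filter Set Topology
open scoped ENNReal Classical symmDiff

/-! With `δ = ε/2`, let `D = {Q ≠ Q'}`, so `μ D ≤ δ⁴`. As `T` preserves `μ`, the fraction of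
`f ∈ F` with `T^f x ∈ D` has mean `μ D`, so by Markov the points whose `(Q,F)`- and
`(Q',F)`-names differ in at least a `δ²`-fraction of places form a set `B` with `μ B ≤ δ²`;
by Markov again over the disintegration, `μ_y B ≤ δ` off a set of fibres of `ν`-measure `≤ δ`.
On such a fibre, removing `B` from an optimal `(Q', δ⁴)`-cover leaves sets of
`d_{Q,F}`-diameter `≤ δ⁴ + 2δ² ≤ ε` carrying mass `≥ 1 - δ⁴ - δ ≥ 1 - ε`. -/

theorem Finset.card_filter_ne_le_add {ι α : Type*} (s : Finset ι) (u v u' v' : ι → α) :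
    (s.filter fun i => u i ≠ v i).card ≤ (s.filter fun i => u' i ≠ v' i).card +
      (s.filter fun i => u i ≠ u' i).card + (s.filter fun i => v i ≠ v' i).card := by
  have hsub : (s.filter fun i => u i ≠ v i) ⊆ (s.filter fun i => u' i ≠ v' i) ∪
      (s.filter fun i => u i ≠ u' i) ∪ (s.filter fun i => v i ≠ v' i) := by
    intro i
    simp only [Finset.mem_filter, Finset.mem_union]
    grind
  exact (Finset.card_le_card hsub).trans <|
    (Finset.card_union_le _ _).trans (Nat.add_le_add_right (Finset.card_union_le _ _) _)

section NameDist

variable {G X ι : Type*}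

noncomputable def nameDist (T : G → X → X) (P P' : X → ι) (F : Finset G) (x : X) : ℝ :=
  ((F.filter fun f => P (T f x) ≠ P' (T f x)).card : ℝ) / (F.card : ℝ)

theorem hamDist_le_hamDist_add_nameDist (T : G → X → X) {r : ℕ} (P P' : X → Fin r)
    (F : Finset G) (x x' : X) :
    hamDist T P F x x' ≤ hamDist T P' F x x' + nameDist T P P' F x + nameDist T P P' F x' := by
  simp only [hamDist, nameDist, ← add_div]
  gcongr
  exact_mod_cast Finset.card_filter_ne_le_add F (fun f => P (T f x)) (fun f => P (T f x'))
    (fun f => P' (T f x)) (fun f => P' (T f x'))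

theorem card_filter_ne_eq_sum_indicator {R : Type*} [AddCommMonoidWithOne R] (T : G → X → X)
    (P P' : X → ι) (F : Finset G) (x : X) :
    ((F.filter fun f => P (T f x) ≠ P' (T f x)).card : R) =
      ∑ f ∈ F, (T f ⁻¹' {x | P x ≠ P' x}).indicator 1 x := by
  rw [Finset.card_filter, Nat.cast_sum]
  refine Finset.sum_congr rfl fun f _ => ?_
  simp [Set.indicator_apply]

variable [MeasurableSpace X] [MeasurableSpace ι] [MeasurableEq ι] {T : G → X → X}
  {P P' : X → ι}

theorem measurable_nameDist (hT : ∀ g, Measurable (T g)) (hP : Measurable P)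
    (hP' : Measurable P') (F : Finset G) : Measurable (nameDist T P P' F) := by
  have hD : MeasurableSet {x | P x ≠ P' x} := (measurableSet_eq_fun hP hP').compl
  unfold nameDist
  simp_rw [card_filter_ne_eq_sum_indicator]
  exact (Finset.measurable_sum F fun f _ =>
    measurable_one.indicator (hD.preimage (hT f))).div_const _

theorem lintegral_nameDist {μ : Measure X} (hT : ∀ g, MeasurePreserving (T g) μ μ)
    (hP : Measurable P) (hP' : Measurable P') {F : Finset G} (hF : F.Nonempty) :
    ∫⁻ x, ENNReal.ofReal (nameDist T P P' F x) ∂μ = partDist μ P P' := by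
  have hD : MeasurableSet {x | P x ≠ P' x} := (measurableSet_eq_fun hP hP').compl
  have hDf : ∀ f, MeasurableSet (T f ⁻¹' {x | P x ≠ P' x}) := fun f =>
    hD.preimage (hT f).measurable
  have hF0 : (0 : ℝ) < F.card := by exact_mod_cast hF.card_pos
  have hpt : ∀ x, ENNReal.ofReal (nameDist T P P' F x) =
      (∑ f ∈ F, (T f ⁻¹' {x | P x ≠ P' x}).indicator 1 x) * (F.card : ℝ≥0∞)⁻¹ := by
    intro x
    rw [nameDist, ENNReal.ofReal_div_of_pos hF0, ENNReal.ofReal_natCast, ENNReal.ofReal_natCast,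
      ← div_eq_mul_inv, card_filter_ne_eq_sum_indicator]
  simp_rw [hpt]
  rw [lintegral_mul_const' _ _ (by simp [hF.ne_empty]),
    lintegral_finsetSum _ fun f _ => measurable_one.indicator (hDf f)]
  simp_rw [lintegral_indicator_one (hDf _), (hT _).measure_preimage hD.nullMeasurableSet]
  rw [Finset.sum_const, nsmul_eq_mul, mul_right_comm,
    ENNReal.mul_inv_cancel (by simp [hF.ne_empty]) (ENNReal.natCast_ne_top _), one_mul, partDist]

end NameDist

section Markov

variable {G X ι : Type*} [MeasurableSpace X] [MeasurableSpace ι] [MeasurableEq ι]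
  {T : G → X → X} {P P' : X → ι} {μ : Measure X}

theorem measure_setOf_le_nameDist_le (hT : ∀ g, MeasurePreserving (T g) μ μ) (hP : Measurable P)
    (hP' : Measurable P') {F : Finset G} (hF : F.Nonempty) {η a : ℝ} (ha : 0 < a)
    (hdist : partDist μ P P' ≤ ENNReal.ofReal η) :
    μ {x | a ≤ nameDist T P P' F x} ≤ ENNReal.ofReal (η / a) :=
  calc μ {x | a ≤ nameDist T P P' F x}
      ≤ μ {x | ENNReal.ofReal a ≤ ENNReal.ofReal (nameDist T P P' F x)} :=
        measure_mono fun _ hx => ENNReal.ofReal_le_ofReal hx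
    _ ≤ (∫⁻ x, ENNReal.ofReal (nameDist T P P' F x) ∂μ) / ENNReal.ofReal a :=
        meas_ge_le_lintegral_div
          (measurable_nameDist (fun g => (hT g).measurable) hP hP' F).ennreal_ofReal.aemeasurable
          (ENNReal.ofReal_pos.2 ha).ne' ENNReal.ofReal_ne_top
    _ ≤ ENNReal.ofReal η / ENNReal.ofReal a := by
        rw [lintegral_nameDist hT hP hP' hF]
        gcongr
    _ = ENNReal.ofReal (η / a) := (ENNReal.ofReal_div_of_pos ha).symm

end Markov

section Disintegration

variable {X Y : Type*} [MeasurableSpace X] [MeasurableSpace Y] {μ : Measure X} {ν : Measure Y}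
  {π : X → Y} {μy : Y → Measure X}

theorem IsDisintegration.isProbabilityMeasure [IsProbabilityMeasure μ]
    (h : IsDisintegration μ ν π μy) : IsProbabilityMeasure ν := by
  constructor
  have hfib : ∀ y, μy y univ = 1 := fun y => (h.prob y).measure_univ
  simpa [hfib, measure_univ] using (h.eq univ .univ).symm

theorem IsDisintegration.measure_setOf_lt_fiber_le (h : IsDisintegration μ ν π μy) {B : Set X}
    (hB : MeasurableSet B) {β b : ℝ} (hb : 0 < b) (hBβ : μ B ≤ ENNReal.ofReal β) :
    ν {y | ENNReal.ofReal b < μy y B} ≤ ENNReal.ofReal (β / b) :=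
  calc ν {y | ENNReal.ofReal b < μy y B} ≤ ν {y | ENNReal.ofReal b ≤ μy y B} :=
        measure_mono <| ofPred_subset_ofPred.2 fun _ => le_of_lt
    _ ≤ (∫⁻ y, μy y B ∂ν) / ENNReal.ofReal b :=
        meas_ge_le_lintegral_div (h.meas B hB).aemeasurable (ENNReal.ofReal_pos.2 hb).ne'
          ENNReal.ofReal_ne_top
    _ ≤ ENNReal.ofReal β / ENNReal.ofReal b := by
        rw [← h.eq B hB]
        gcongr
    _ = ENNReal.ofReal (β / b) := (ENNReal.ofReal_div_of_pos hb).symm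

end Disintegration

theorem ENNReal.ofReal_le_ofReal_sub {a b c : ℝ} (hc : 0 ≤ c) (h : a + c ≤ b) :
    ENNReal.ofReal a ≤ ENNReal.ofReal b - ENNReal.ofReal c := by
  rw [← ENNReal.ofReal_sub _ hc]
  exact ENNReal.ofReal_le_ofReal (by linarith)

section Covering

variable {G X Y : Type*} {T : G → X → X} {r : ℕ} {P : X → Fin r} {F : Finset G}

theorem exists_cylinder_cover (T : G → X → X) (P : X → Fin r) (F : Finset G) :
    ∃ E : Fin (Fintype.card (F → Fin r)) → Set X, (∀ i, diamLE T P F (E i) 0) ∧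
      ⋃ i, E i = univ := by
  let e := Fintype.equivFin (F → Fin r)
  refine ⟨fun i => {x | ∀ f : F, P (T f x) = e.symm i f}, fun i x hx x' hx' => ?_, ?_⟩
  · have hname : (F.filter fun f => P (T f x) ≠ P (T f x')) = ∅ :=
      Finset.filter_eq_empty_iff.2 fun f hf => not_not.2 ((hx ⟨f, hf⟩).trans (hx' ⟨f, hf⟩).symm)
    simp [hamDist, hname]
  · exact eq_univ_of_forall fun x => mem_iUnion.2 ⟨e fun f => P (T f x), fun f => by simp⟩

variable [MeasurableSpace X] [MeasurableSpace Y] {ε : ℝ}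

theorem exists_cover_card_names (lam : Measure X) [IsProbabilityMeasure lam] (hε : 0 ≤ ε) :
    ∃ E : Fin (Fintype.card (F → Fin r)) → Set X, (∀ i, diamLE T P F (E i) ε) ∧
      ENNReal.ofReal (1 - ε) ≤ lam (⋃ i, E i) := by
  obtain ⟨E, hE, hEU⟩ := exists_cylinder_cover T P F
  refine ⟨E, fun i x hx x' hx' => (hE i x hx x' hx').trans hε, ?_⟩
  rw [hEU, measure_univ]
  exact ENNReal.ofReal_le_one.2 (by linarith)

theorem hamCov_le_card_names (lam : Measure X) [IsProbabilityMeasure lam] (hε : 0 ≤ ε) :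
    hamCov T lam P F ε ≤ Fintype.card (F → Fin r) :=
  Nat.sInf_le (exists_cover_card_names lam hε)

theorem exists_cover_card_hamCov (lam : Measure X) [IsProbabilityMeasure lam] (hε : 0 ≤ ε) :
    ∃ E : Fin (hamCov T lam P F ε) → Set X, (∀ i, diamLE T P F (E i) ε) ∧
      ENNReal.ofReal (1 - ε) ≤ lam (⋃ i, E i) :=
  Nat.sInf_mem (s := {M : ℕ | ∃ E : Fin M → Set X, (∀ i, diamLE T P F (E i) ε) ∧
    ENNReal.ofReal (1 - ε) ≤ lam (⋃ i, E i)}) ⟨_, exists_cover_card_names lam hε⟩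

theorem exists_fiberSet_hamCovRel {ν : Measure Y} [IsProbabilityMeasure ν] {μy : Y → Measure X}
    (hμy : ∀ y, IsProbabilityMeasure (μy y)) (hε : 0 ≤ ε) :
    ∃ S : Set Y, MeasurableSet S ∧ ENNReal.ofReal (1 - ε) ≤ ν S ∧
      ∀ y ∈ S, hamCov T (μy y) P F ε ≤ hamCovRel T μy ν P F ε := by
  refine Nat.sInf_mem (s := {M : ℕ | ∃ S : Set Y, MeasurableSet S ∧
    ENNReal.ofReal (1 - ε) ≤ ν S ∧ ∀ y ∈ S, hamCov T (μy y) P F ε ≤ M})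
      ⟨Fintype.card (F → Fin r), univ, .univ, ?_, fun y _ => ?_⟩
  · rw [measure_univ]
    exact ENNReal.ofReal_le_one.2 (by linarith)
  · exact hamCov_le_card_names (μy y) hε

theorem hamCov_le_hamCov_of_measure_nameDist_le {lam : Measure X} [IsProbabilityMeasure lam]
    {P' : X → Fin r} {η a b : ℝ} (hη : 0 ≤ η) (hb : 0 ≤ b) (hdiam : η + 2 * a ≤ ε)
    (hmass : η + b ≤ ε) (hbad : lam {x | a ≤ nameDist T P P' F x} ≤ ENNReal.ofReal b) :
    hamCov T lam P F ε ≤ hamCov T lam P' F η := by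
  obtain ⟨E, hEdiam, hEmass⟩ := exists_cover_card_hamCov (T := T) (P := P') (F := F) lam hη
  refine Nat.sInf_le ⟨fun i => E i \ {x | a ≤ nameDist T P P' F x}, fun i x hx x' hx' => ?_, ?_⟩
  · have hxa : nameDist T P P' F x < a := not_le.1 hx.2
    have hx'a : nameDist T P P' F x' < a := not_le.1 hx'.2
    linarith [hamDist_le_hamDist_add_nameDist T P P' F x x', hEdiam i x hx.1 x' hx'.1]
  · calc ENNReal.ofReal (1 - ε) ≤ ENNReal.ofReal (1 - η) - ENNReal.ofReal b :=
          ENNReal.ofReal_le_ofReal_sub hb (by linarith)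
      _ ≤ lam (⋃ i, E i) - lam {x | a ≤ nameDist T P P' F x} := tsub_le_tsub hEmass hbad
      _ ≤ lam (⋃ i, E i \ {x | a ≤ nameDist T P P' F x}) := by
          rw [← iUnion_sdiff]
          exact le_measure_sdiff

theorem hamCovRel_le_hamCovRel_of_hamCov_le {ν : Measure Y} [IsProbabilityMeasure ν]
    {μy : Y → Measure X} (hμy : ∀ y, IsProbabilityMeasure (μy y)) {P' : X → Fin r}
    {A : Set Y} (hA : MeasurableSet A) {η c : ℝ} (hη : 0 ≤ η) (hc : 0 ≤ c) (hmass : η + c ≤ ε)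
    (hAc : ν Aᶜ ≤ ENNReal.ofReal c)
    (hfiber : ∀ y ∈ A, hamCov T (μy y) P F ε ≤ hamCov T (μy y) P' F η) :
    hamCovRel T μy ν P F ε ≤ hamCovRel T μy ν P' F η := by
  obtain ⟨S, hS, hSmass, hSle⟩ :=
    exists_fiberSet_hamCovRel (T := T) (P := P') (F := F) (ν := ν) hμy hη
  refine Nat.sInf_le ⟨S ∩ A, hS.inter hA, ?_, fun y hy => (hfiber y hy.2).trans (hSle y hy.1)⟩
  calc ENNReal.ofReal (1 - ε) ≤ ENNReal.ofReal (1 - η) - ENNReal.ofReal c :=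
        ENNReal.ofReal_le_ofReal_sub hc (by linarith)
    _ ≤ ν S - ν Aᶜ := tsub_le_tsub hSmass hAc
    _ ≤ ν (S ∩ A) := sdiff_compl (s := S) (t := A) ▸ le_measure_sdiff

end Covering

theorem relative_cov_approximate_by_nearby_partition_general
    {G X Y : Type*} [Group G]
    [MeasurableSpace X] [MeasurableSpace Y]
    (T : G → X → X) (μ : Measure X) (ν : Measure Y)
    (hX : IsMPSystem T μ)
    (π : X → Y)
    (μy : Y → Measure X) (hdis : IsDisintegration μ ν π μy)
    (F : ℕ → Finset G) (hF : IsFolner F)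
    (r : ℕ) (Q : X → Fin r) (hQ : Measurable Q)
    (ε : ℝ) (hε0 : 0 < ε) (hε1 : ε < 1) :
    ∃ ε' > 0, ∀ Q' : X → Fin r, Measurable Q' →
      partDist μ Q Q' ≤ ENNReal.ofReal ε' →
      ∀ᶠ n in atTop, hamCovRel T μy ν Q (F n) ε ≤ hamCovRel T μy ν Q' (F n) ε' := by
  set δ := ε / 2 with hδ
  have hδ0 : 0 < δ := by positivity
  refine ⟨δ ^ 4, by positivity, fun Q' hQ' hdist => Eventually.of_forall fun n => ?_⟩
  have := hX.prob
  have := hdis.isProbabilityMeasure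
  set B := {x | δ ^ 2 ≤ nameDist T Q Q' (F n) x}
  have hB : MeasurableSet B :=
    measurableSet_le measurable_const (measurable_nameDist hX.meas hQ hQ' (F n))
  have hμB : μ B ≤ ENNReal.ofReal (δ ^ 2) := by
    have h := measure_setOf_le_nameDist_le hX.mp hQ hQ' (hF.1 n) (a := δ ^ 2) (by positivity)
      hdist
    rwa [show δ ^ 4 / δ ^ 2 = δ ^ 2 by field_simp] at h
  have hνA : ν {y | μy y B ≤ ENNReal.ofReal δ}ᶜ ≤ ENNReal.ofReal δ := by
    have h := hdis.measure_setOf_lt_fiber_le hB hδ0 hμB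
    simpa only [compl_ofPred, not_le, show δ ^ 2 / δ = δ by field_simp] using h
  have hsmall : δ ^ 4 + 2 * δ ^ 2 ≤ ε ∧ δ ^ 4 + δ ≤ ε := by
    constructor <;> nlinarith [pow_le_one₀ hδ0.le (by linarith : δ ≤ 1) (n := 3)]
  refine hamCovRel_le_hamCovRel_of_hamCov_le hdis.prob
    (measurableSet_le (hdis.meas B hB) measurable_const) (by positivity) hδ0.le hsmall.2 hνA
    fun y hy => ?_
  have := hdis.prob y
  exact hamCov_le_hamCov_of_measure_nameDist_le (by positivity) hδ0.le hsmall.1 hsmall.2 hy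

/-- Lemma `ApproximateByNearbyPartition`.
For any finite measurable partition `Q` of `X` and any `0 < ε < 1` there exists `ε' > 0`
such that whenever `Q'` is a partition (with the same index set) with `dist_μ(Q,Q') ≤ ε'`,
one has `cov(μ, Q, F_n, ε | π) ≤ cov(μ, Q', F_n, ε' | π)` for all sufficiently large `n`. -/
theorem relative_cov_approximate_by_nearby_partition
    {G X Y : Type*} [Group G] [Countable G]
    [MeasurableSpace X] [MeasurableSpace Y] [StandardBorelSpace X] [StandardBorelSpace Y]
    (T : G → X → X) (μ : Measure X) (S : G → Y → Y) (ν : Measure Y)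
    (hX : IsMPSystem T μ) (hY : IsMPSystem S ν)
    (π : X → Y) (hπ : IsFactorMap T μ S ν π)
    (μy : Y → Measure X) (hdis : IsDisintegration μ ν π μy)
    (F : ℕ → Finset G) (hF : IsFolner F)
    (r : ℕ) (Q : X → Fin r) (hQ : Measurable Q)
    (ε : ℝ) (hε0 : 0 < ε) (hε1 : ε < 1) :
    ∃ ε' > 0, ∀ Q' : X → Fin r, Measurable Q' →
      partDist μ Q Q' ≤ ENNReal.ofReal ε' →
      ∀ᶠ n in atTop, hamCovRel T μy ν Q (F n) ε ≤ hamCovRel T μy ν Q' (F n) ε' :=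
  relative_cov_approximate_by_nearby_partition_general T μ ν hX π μy hdis F hF r Q hQ ε hε0 hε1
end

section
/- Let H be a compact metrizable group with Haar probability measure m_H and a translation-invariant compatible metric ρ, let a : G × Y → H be a cocycle over the G-system Y = (Y, ν, S), and let X = (Y × H, ν × m_H, T) be the skew product with T^g(y, h) = (S^g y, a(g,y)h); assume X is ergodic, and let π : X → Y be the projection onto the first coordinate. Let Q = {Q_1, …, Q_k} be a finite Borel partition of H and let P be the partition {Y × Q_1, …, Y × Q_k} of Y × H. Then for any ε > 0 there exists L = L(Q, ε) such that for any Følner sequence (F_n) for G, cov(ν × m_H, P, F_n, ε | π) ≤ L for all sufficiently large n. -/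
open MeasureTheory Filter Set Topology
open scoped ENNReal Classical symmDiff

/-!
Each cell `Q⁻¹{i}` is approximated from inside by a compact set `Kᵢ`; the `Kᵢ` are pairwise
disjoint, hence `δ`-separated for some `δ > 0`, so two points of `W = ⋃ Kᵢ` at distance `< δ`
lie in the same cell. The fibre maps `h ↦ a(g, y) h` are isometries, so `(y, h)` and `(y, h')`
with `d(h, h') < δ` have the same `P`-name at every `f ∈ F` at which both `a(f, y) h` and
`a(f, y) h'` lie in `W`. By invariance of `ν × m_H`, the expected number of `f ∈ F` with
`a(f, y) h ∉ W` is `|F| m_H(Wᶜ)`, and two applications of Markov's inequality show that for most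
`y`, most `h` make at most `ε |F| / 2` such visits. Covering `H` by finitely many `δ/2`-balls then
covers most of each such fibre by sets of `d_{P,F}`-diameter `≤ ε`, and the number of balls
depends neither on `F` nor on the Følner sequence.
-/

section Measure

variable {X : Type*} [MeasurableSpace X]

lemma ofReal_one_sub_le_prob_compl (μ : Measure X) [IsProbabilityMeasure μ] {s : Set X}
    (hs : MeasurableSet s) {ε : ℝ} (hε : 0 ≤ ε) (h : μ s ≤ ENNReal.ofReal ε) :
    ENNReal.ofReal (1 - ε) ≤ μ sᶜ := by
  rw [prob_compl_eq_one_sub hs, ENNReal.ofReal_sub _ hε, ENNReal.ofReal_one]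
  exact tsub_le_tsub_left h 1

lemma meas_ge_le_of_lintegral_le_mul {μ : Measure X} {f : X → ℝ≥0∞} (hf : AEMeasurable f μ)
    {c d : ℝ≥0∞} (hc : c ≠ 0) (hc' : c ≠ ∞) (h : ∫⁻ x, f x ∂μ ≤ c * d) :
    μ {x | c ≤ f x} ≤ d :=
  (ENNReal.mul_le_mul_iff_right hc hc').1 ((mul_meas_ge_le_lintegral₀ hf c).trans h)

lemma meas_fiber_ge_le_of_lintegral_le_mul {Z : Type*} [MeasurableSpace Z] (ν : Measure X)
    (m : Measure Z) [SFinite m] {f : X × Z → ℝ≥0∞} (hf : Measurable f) {c e : ℝ≥0∞}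
    (hc : c ≠ 0) (hc' : c ≠ ∞) (he : e ≠ 0) (he' : e ≠ ∞)
    (h : ∫⁻ p, f p ∂(ν.prod m) ≤ c * (e * e)) :
    ν {x | e ≤ m {z | c ≤ f (x, z)}} ≤ e := by
  have hmeas : MeasurableSet {p | c ≤ f p} := measurableSet_le measurable_const hf
  have hbad : ν.prod m {p | c ≤ f p} ≤ e * e :=
    meas_ge_le_of_lintegral_le_mul hf.aemeasurable hc hc' h
  rw [Measure.prod_apply hmeas] at hbad
  exact meas_ge_le_of_lintegral_le_mul (measurable_measure_prodMk_left hmeas).aemeasurable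
    he he' hbad

end Measure

section Hamming

variable {G X : Type*} (T : G → X → X) {r : ℕ} (P : X → Fin r) (F : Finset G)

lemma lintegral_card_visits [MeasurableSpace X] {μ : Measure X}
    (hT : ∀ g, MeasurePreserving (T g) μ μ) {s : Set X} [DecidablePred (· ∈ s)]
    (hs : MeasurableSet s) :
    ∫⁻ x, ((F.filter fun f => T f x ∈ s).card : ℝ≥0∞) ∂μ = F.card * μ s := by
  have hpre : ∀ f, MeasurableSet (T f ⁻¹' s) := fun f => (hT f).measurable hs
  calc ∫⁻ x, ((F.filter fun f => T f x ∈ s).card : ℝ≥0∞) ∂μ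
      = ∑ f ∈ F, ∫⁻ x, (T f ⁻¹' s).indicator 1 x ∂μ := by
        rw [← lintegral_finsetSum _ fun f _ => measurable_one.indicator (hpre f)]
        simp only [Finset.natCast_card_filter, Set.indicator_apply, Set.mem_preimage,
          Pi.one_apply]
    _ = F.card * μ s := by
        simp [lintegral_indicator_one (hpre _), (hT _).measure_preimage hs.nullMeasurableSet]

lemma measurable_card_visits [MeasurableSpace X] (hT : ∀ g, Measurable (T g)) {s : Set X}
    [DecidablePred (· ∈ s)] (hs : MeasurableSet s) :
    Measurable fun x => ((F.filter fun f => T f x ∈ s).card : ℝ≥0∞) := by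
  simp_rw [Finset.natCast_card_filter]
  exact Finset.measurable_sum _ fun f _ =>
    Measurable.ite (hT f hs) measurable_const measurable_const

lemma hamDist_le_of_agree_off (s : Set X) [DecidablePred (· ∈ s)] {x x' : X}
    (hagree : ∀ f ∈ F, T f x ∉ s → T f x' ∉ s → P (T f x) = P (T f x')) :
    hamDist T P F x x' ≤
      (((F.filter fun f => T f x ∈ s).card : ℝ) + (F.filter fun f => T f x' ∈ s).card) /
        F.card := by
  unfold hamDist
  gcongr
  have hsub : (F.filter fun f => P (T f x) ≠ P (T f x')) ⊆
      (F.filter fun f => T f x ∈ s) ∪ (F.filter fun f => T f x' ∈ s) := by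
    intro f hf
    simp only [Finset.mem_filter, Finset.mem_union] at hf ⊢
    by_contra! hout
    exact hf.2 (hagree f hf.1 (hout.1 hf.1) (hout.2 hf.1))
  exact_mod_cast (Finset.card_le_card hsub).trans (Finset.card_union_le _ _)

lemma diamLE_of_agree_off (s : Set X) [DecidablePred (· ∈ s)] {E : Set X} {ε : ℝ} (hε : 0 ≤ ε)
    (hagree : ∀ x ∈ E, ∀ x' ∈ E, ∀ f ∈ F, T f x ∉ s → T f x' ∉ s → P (T f x) = P (T f x'))
    (hrare : ∀ x ∈ E, ((F.filter fun f => T f x ∈ s).card : ℝ) ≤ ε / 2 * F.card) :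
    diamLE T P F E ε := fun x hx x' hx' =>
  (hamDist_le_of_agree_off T P F s (hagree x hx x' hx')).trans <|
    div_le_of_le_mul₀ (Nat.cast_nonneg _) hε (by linarith [hrare x hx, hrare x' hx'])

lemma hamCov_le_card_s9 [MeasurableSpace X] (lam : Measure X) {ε : ℝ} {ι : Type*} (t : Finset ι)
    (E : ι → Set X) (hE : ∀ i ∈ t, diamLE T P F (E i) ε)
    (hcov : ENNReal.ofReal (1 - ε) ≤ lam (⋃ i ∈ t, E i)) :
    hamCov T lam P F ε ≤ t.card := by
  refine Nat.sInf_le ⟨fun j => E (t.equivFin.symm j), fun j => hE _ (t.equivFin.symm j).2, ?_⟩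
  rwa [t.equivFin.symm.surjective.iUnion_comp (fun i : t => E i), Set.iUnion_subtype]

end Hamming

section Partition

open Function

variable {H ι : Type*}

lemma exists_pos_le_dist_of_pairwise_disjoint [Finite ι] [MetricSpace H] {K : ι → Set H}
    (hK : ∀ i, IsCompact (K i)) (hdisj : Pairwise (Disjoint on K)) :
    ∃ δ > 0, ∀ i j, i ≠ j → ∀ x ∈ K i, ∀ y ∈ K j, δ ≤ dist x y := by
  have hsep : ∀ᶠ δ in 𝓝[>] (0 : ℝ),
      ∀ p : ι × ι, p.1 ≠ p.2 → ∀ x ∈ K p.1, ∀ y ∈ K p.2, δ ≤ dist x y := by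
    refine eventually_all.2 fun ⟨i, j⟩ => ?_
    by_cases hij : i = j
    · exact Eventually.of_forall fun _ hne => absurd hij hne
    obtain ⟨r, hr, hrK⟩ :=
      Metric.exists_pos_forall_lt_edist (hK i) (hK j).isClosed (hdisj hij)
    filter_upwards [Ioo_mem_nhdsGT hr] with δ hδ _ x hx y hy
    refine hδ.2.le.trans (not_lt.1 fun hlt => (hrK x hx y hy).not_ge ?_)
    rw [← ENNReal.ofReal_coe_nnreal]
    exact (edist_lt_ofReal.2 hlt).le
  obtain ⟨δ, hδ, hδpos⟩ := (hsep.and self_mem_nhdsWithin).exists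
  exact ⟨δ, hδpos, fun i j hij => hδ (i, j) hij⟩

variable [Fintype ι] [MeasurableSpace ι] [MeasurableSingletonClass ι]

lemma exists_isCompact_subset_fibers_measure_compl_le [TopologicalSpace H]
    [T2Space H] [MeasurableSpace H] [OpensMeasurableSpace H] (μ : Measure H) [IsFiniteMeasure μ]
    [μ.InnerRegularCompactLTTop] {Q : H → ι} (hQ : Measurable Q) {η : ℝ≥0∞} (hη : η ≠ 0) :
    ∃ K : ι → Set H, (∀ i, K i ⊆ Q ⁻¹' {i}) ∧ (∀ i, IsCompact (K i)) ∧
      μ (⋃ i, K i)ᶜ ≤ η := by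
  have hη' : η / Fintype.card ι ≠ 0 := ENNReal.div_ne_zero.2 ⟨hη, ENNReal.natCast_ne_top _⟩
  choose K hKQ hK hμK using fun i : ι =>
    (hQ (measurableSet_singleton i)).exists_isCompact_sdiff_lt (measure_ne_top μ _) hη'
  refine ⟨K, hKQ, hK, ?_⟩
  have hcompl : (⋃ i, K i)ᶜ ⊆ ⋃ i, Q ⁻¹' {i} \ K i := fun x hx =>
    mem_iUnion.2 ⟨Q x, rfl, fun hxK => hx (mem_iUnion.2 ⟨Q x, hxK⟩)⟩
  calc μ (⋃ i, K i)ᶜ ≤ ∑ i, μ (Q ⁻¹' {i} \ K i) :=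
        (measure_mono hcompl).trans (measure_iUnion_fintype_le _ _)
    _ ≤ ∑ _i : ι, η / Fintype.card ι := Finset.sum_le_sum fun i _ => (hμK i).le
    _ ≤ η := by
        rw [Finset.sum_const, Finset.card_univ, nsmul_eq_mul]
        exact ENNReal.mul_div_le

lemma exists_measure_compl_le_forall_dist_lt_imp_eq [MetricSpace H]
    [MeasurableSpace H] [BorelSpace H] (μ : Measure H) [IsFiniteMeasure μ]
    [μ.InnerRegularCompactLTTop] {Q : H → ι} (hQ : Measurable Q) {η : ℝ≥0∞} (hη : η ≠ 0) :
    ∃ W : Set H, MeasurableSet W ∧ μ Wᶜ ≤ η ∧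
      ∃ δ > 0, ∀ x ∈ W, ∀ y ∈ W, dist x y < δ → Q x = Q y := by
  obtain ⟨K, hKQ, hK, hμ⟩ := exists_isCompact_subset_fibers_measure_compl_le μ hQ hη
  have hdisj : Pairwise (Disjoint on K) := fun i j hij =>
    Set.disjoint_left.2 fun x hxi hxj => hij ((hKQ i hxi).symm.trans (hKQ j hxj))
  obtain ⟨δ, hδ, hsep⟩ := exists_pos_le_dist_of_pairwise_disjoint hK hdisj
  refine ⟨⋃ i, K i, MeasurableSet.iUnion fun i => (hK i).isClosed.measurableSet, hμ, δ, hδ, ?_⟩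
  simp only [mem_iUnion]
  rintro x ⟨i, hx⟩ y ⟨j, hy⟩ hxy
  by_contra hne
  have hij : i ≠ j := fun h => hne ((hKQ i hx).trans (h ▸ (hKQ j hy).symm))
  exact (hsep i j hij x hx y hy).not_gt hxy

end Partition

section RareVisits

variable {G X Z : Type*} [MeasurableSpace X] [MeasurableSpace Z] {ν : Measure X}
  {m : Measure Z} [IsProbabilityMeasure ν] [IsProbabilityMeasure m]

lemma exists_large_set_fibers_rare_visits {T : G → X × Z → X × Z}
    (hT : ∀ g, MeasurePreserving (T g) (ν.prod m) (ν.prod m)) {F : Finset G} (hF : F.Nonempty)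
    {s : Set (X × Z)} [DecidablePred (· ∈ s)] (hs : MeasurableSet s) {ε : ℝ} (hε : 0 < ε)
    (hsμ : ν.prod m s ≤ ENNReal.ofReal (ε / 2) * (ENNReal.ofReal ε * ENNReal.ofReal ε)) :
    ∃ B : Set X, MeasurableSet B ∧ ENNReal.ofReal (1 - ε) ≤ ν B ∧
      ∀ x ∈ B, ∃ D : Set Z, ENNReal.ofReal (1 - ε) ≤ m D ∧
        ∀ z ∈ D, ((F.filter fun f => T f (x, z) ∈ s).card : ℝ) ≤ ε / 2 * F.card := by
  let N p : ℝ≥0∞ := (F.filter fun f => T f p ∈ s).card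
  let c := ENNReal.ofReal (ε / 2 * F.card)
  have hc : c ≠ 0 := (ENNReal.ofReal_pos.2 (by have := hF.card_pos; positivity)).ne'
  have hN : Measurable N := measurable_card_visits T F (fun g => (hT g).measurable) hs
  have hint : ∫⁻ p, N p ∂(ν.prod m) ≤ c * (ENNReal.ofReal ε * ENNReal.ofReal ε) := by
    rw [lintegral_card_visits T F hT hs, show c = _ from ENNReal.ofReal_mul (by positivity),
      ENNReal.ofReal_natCast, mul_comm (ENNReal.ofReal _), mul_assoc]
    gcongr
  have hfib : ∀ x, MeasurableSet {z | c ≤ N (x, z)} := fun x =>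
    measurableSet_le measurable_const (hN.comp measurable_prodMk_left)
  have hbad : MeasurableSet {x | ENNReal.ofReal ε ≤ m {z | c ≤ N (x, z)}} :=
    measurableSet_le measurable_const
      (measurable_measure_prodMk_left (measurableSet_le measurable_const hN))
  refine ⟨_, hbad.compl, ofReal_one_sub_le_prob_compl ν hbad hε.le
    (meas_fiber_ge_le_of_lintegral_le_mul ν m hN hc ENNReal.ofReal_ne_top
      (ENNReal.ofReal_pos.2 hε).ne' ENNReal.ofReal_ne_top hint), fun x hx => ?_⟩
  refine ⟨_, ofReal_one_sub_le_prob_compl m (hfib x) hε.le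
    (not_le.1 (Set.notMem_ofPred_iff.1 hx)).le, fun z hz => ?_⟩
  exact (ENNReal.natCast_lt_ofReal.1 (not_le.1 hz)).le

end RareVisits

section SkewProduct

variable {G Y H : Type*}

def skewProduct [Mul H] (S : G → Y → Y) (a : G → Y → H) (g : G) (p : Y × H) : Y × H :=
  (S g p.1, a g p.1 * p.2)

lemma hamCov_skewProduct_fiber_le [MeasurableSpace Y] [Group H] [MetricSpace H]
    [MeasurableSpace H] (S : G → Y → Y) (a : G → Y → H) (mH : Measure H) [SFinite mH]
    (hdistinv : ∀ g x x' : H, dist (g * x) (g * x') = dist x x') {k : ℕ} {Q : H → Fin k}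
    {W : Set H} {δ : ℝ} (hW : ∀ x ∈ W, ∀ x' ∈ W, dist x x' < δ → Q x = Q x')
    {t : Finset H} (ht : ∀ h, ∃ c ∈ t, dist h c < δ / 2) (F : Finset G) {ε : ℝ} (hε : 0 ≤ ε)
    (y : Y) {D : Set H}
    (hD : ∀ h ∈ D,
      ((F.filter fun f => skewProduct S a f (y, h) ∈ univ ×ˢ Wᶜ).card : ℝ) ≤ ε / 2 * F.card)
    (hDμ : ENNReal.ofReal (1 - ε) ≤ mH D) :
    hamCov (skewProduct S a) ((Measure.dirac y).prod mH) (fun p => Q p.2) F ε ≤ t.card := by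
  refine hamCov_le_card_s9 _ _ _ _ t (fun c => {y} ×ˢ (Metric.ball c (δ / 2) ∩ D))
    (fun c _ => diamLE_of_agree_off _ _ _ (univ ×ˢ Wᶜ) hε ?_ ?_) ?_
  · rintro ⟨y₁, h⟩ ⟨rfl, hb, -⟩ ⟨y₂, h'⟩ ⟨rfl, hb', -⟩ f - hf hf'
    simp only [skewProduct, mem_prod, mem_univ, mem_compl_iff, true_and, not_not] at hf hf' ⊢
    refine hW _ hf _ hf' ?_
    rw [hdistinv]
    linarith [dist_triangle_right h h' c, Metric.mem_ball.1 hb, Metric.mem_ball.1 hb']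
  · rintro ⟨y₁, h⟩ ⟨rfl, -, hhD⟩
    exact hD h hhD
  · have hcover : {y} ×ˢ D ⊆ ⋃ c ∈ t, {y} ×ˢ (Metric.ball c (δ / 2) ∩ D) := by
      rintro ⟨y', h⟩ ⟨hy', hhD⟩
      obtain ⟨c, hc, hhc⟩ := ht h
      exact mem_iUnion₂.2 ⟨c, hc, hy', hhc, hhD⟩
    calc ENNReal.ofReal (1 - ε) ≤ mH D := hDμ
      _ = (Measure.dirac y).prod mH ({y} ×ˢ D) := by
        rw [Measure.prod_prod, Measure.dirac_apply_of_mem (mem_singleton y), one_mul]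
      _ ≤ _ := measure_mono hcover

end SkewProduct

theorem skew_product_bounded_complexity_special_partitions_general
    {G Y H : Type*} [Group G]
    [MeasurableSpace Y]
    [Group H] [MetricSpace H] [CompactSpace H]
    [MeasurableSpace H] [BorelSpace H]
    (S : G → Y → Y) (ν : Measure Y)
    (mH : Measure H) (hHprob : IsProbabilityMeasure mH)
    (hdistinv : ∀ g x x' : H, dist (g * x) (g * x') = dist x x')
    (a : G → Y → H)
    (hY : IsMPSystem S ν)
    (hX : IsMPSystem (fun g (p : Y × H) => (S g p.1, a g p.1 * p.2)) (ν.prod mH))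
    (k : ℕ) (Q : H → Fin k) (hQ : Measurable Q)
    (ε : ℝ) (hε : 0 < ε) :
    ∃ L : ℕ, ∀ F : ℕ → Finset G, IsFolner F →
      ∀ᶠ n in atTop,
        hamCovRel (fun g (p : Y × H) => (S g p.1, a g p.1 * p.2))
          (fun y => (Measure.dirac y).prod mH) ν (fun p : Y × H => Q p.2) (F n) ε ≤ L := by
  have := hY.prob
  obtain ⟨W, hWm, hWc, δ, hδ, hW⟩ := exists_measure_compl_le_forall_dist_lt_imp_eq mH hQ
    (η := ENNReal.ofReal (ε / 2) * (ENNReal.ofReal ε * ENNReal.ofReal ε)) (by simp [hε])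
  obtain ⟨t, -, htfin, htcov⟩ :=
    finite_cover_balls_of_compact (isCompact_univ (X := H)) (half_pos hδ)
  refine ⟨htfin.toFinset.card, fun F hF => Eventually.of_forall fun n => ?_⟩
  obtain ⟨B, hBm, hBν, hBfib⟩ := exists_large_set_fibers_rare_visits (T := skewProduct S a)
    hX.mp (hF.1 n) (MeasurableSet.univ.prod hWm.compl) hε
    (by rwa [Measure.prod_prod, measure_univ, one_mul])
  refine Nat.sInf_le ⟨B, hBm, hBν, fun y hy => ?_⟩
  obtain ⟨D, hDμ, hD⟩ := hBfib y hy
  exact hamCov_skewProduct_fiber_le S a mH hdistinv hW (t := htfin.toFinset)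
    (fun h => by simpa using htcov (mem_univ h)) (F n) hε.le y hD hDμ

/-- Proposition `IsometricImpliesBoundedForSpecialPartitions`.
Let `H` be a compact metrizable group with Haar probability measure `mH` and
translation-invariant compatible metric, `a` a cocycle over `Y` into `H`, and let `X`
be the ergodic skew product `(Y × H, ν × mH)`, an extension of `Y` via the first-coordinate
projection.  For a partition `P = {Y × Q_i}` coming from a finite Borel partition `Q` of `H`
and any `ε > 0`, there is an `L` such that for every Følner sequence,
`cov(ν × mH, P, F_n, ε | π) ≤ L` for all sufficiently large `n`. -/
theorem skew_product_bounded_complexity_special_partitions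
    {G Y H : Type*} [Group G] [Countable G]
    [MeasurableSpace Y] [StandardBorelSpace Y]
    [Group H] [MetricSpace H] [IsTopologicalGroup H] [CompactSpace H]
    [MeasurableSpace H] [BorelSpace H]
    (S : G → Y → Y) (ν : Measure Y)
    (mH : Measure H) (hHaar : mH.IsHaarMeasure) (hHprob : IsProbabilityMeasure mH)
    (hdistinv : ∀ g x x' : H, dist (g * x) (g * x') = dist x x')
    (a : G → Y → H) (ha : ∀ g, Measurable (a g))
    (hY : IsMPSystem S ν)
    (hX : IsMPSystem (fun g (p : Y × H) => (S g p.1, a g p.1 * p.2)) (ν.prod mH))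
    (hErg : IsErgodicAction (fun g (p : Y × H) => (S g p.1, a g p.1 * p.2)) (ν.prod mH))
    (k : ℕ) (Q : H → Fin k) (hQ : Measurable Q)
    (ε : ℝ) (hε : 0 < ε) :
    ∃ L : ℕ, ∀ F : ℕ → Finset G, IsFolner F →
      ∀ᶠ n in atTop,
        hamCovRel (fun g (p : Y × H) => (S g p.1, a g p.1 * p.2))
          (fun y => (Measure.dirac y).prod mH) ν (fun p : Y × H => Q p.2) (F n) ε ≤ L :=
  skew_product_bounded_complexity_special_partitions_general S ν mH hHprob hdistinv a hY hX k Q hQ ε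
    hε
end
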